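/- Let C be a small category, Y a simplicial set, and δ a nonsingular twisted structure on C with coefficients in Y. Then the mixed simplicial identities hold for the twisted faces and degeneracies on {Y_n × N(C)_n}: for 0 ≤ i < j ≤ n, d_i^δ ∘ s_j^δ = s_{j−1}^δ ∘ d_i^δ; for i = j and for i = j+1 (0 ≤ j ≤ n), d_i^δ ∘ s_j^δ is the identity of Y_n × N(C)_n; and for j+1 < i ≤ n+1, d_i^δ ∘ s_j^δ = s_j^δ ∘ d_{i−1}^δ. -/

import Mathlib

open CategoryTheory Simplicial

universe u

/-- The `i`-th vertex of an `n`-simplex of the nerve of a small category `C`. -/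
def nerveVertex {C : Type u} [SmallCategory C] {n : ℕ}
    (σ : nerve C _⦋n⦌) (i : Fin (n + 1)) : C :=
  σ.obj i

/-- The twisted face map `d_i^δ(y, σ) = (δ_{v_i}(d_i y), d_i σ)`. -/
def twistedFace {C : Type u} [SmallCategory C] (Y : SSet.{u})
    (δ : C → (Y ≅ Y)) {n : ℕ} (i : Fin (n + 2)) :
    Y _⦋n + 1⦌ × nerve C _⦋n + 1⦌ → Y _⦋n⦌ × nerve C _⦋n⦌ :=
  fun p => ((δ (nerveVertex p.2 i)).hom.app (Opposite.op (SimplexCategory.mk n)) (Y.δ i p.1),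
    (nerve C).δ i p.2)

/-- The twisted degeneracy map `s_i^δ(y, σ) = (δ_{v_i}⁻¹(s_i y), s_i σ)`. -/
def twistedDegeneracy {C : Type u} [SmallCategory C] (Y : SSet.{u})
    (δ : C → (Y ≅ Y)) {n : ℕ} (i : Fin (n + 1)) :
    Y _⦋n⦌ × nerve C _⦋n⦌ → Y _⦋n + 1⦌ × nerve C _⦋n + 1⦌ :=
  fun p => ((δ (nerveVertex p.2 i)).inv.app (Opposite.op (SimplexCategory.mk (n + 1)))
      (Y.σ i p.1),
    (nerve C).σ i p.2)

/-!
On the `N(C)` component the identities are those of the simplicial set `N(C)`. On the `Y`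
component, naturality of the `δ_v` moves both twists past the faces and degeneracies, so each
side becomes a simplicial identity of `Y` followed by `δ_a` and `δ_b⁻¹` for two vertices `a, b`
of `σ`, in opposite orders. Any two vertices of a simplex of the nerve are joined by a morphism,
so `δ_a` and `δ_b` commute, hence so do `δ_a` and `δ_b⁻¹`. In the cases `d_j s_j` and
`d_{j+1} s_j` the two vertices coincide and the twists cancel.
-/

lemma CategoryTheory.Iso.hom_comp_inv_comm {D : Type*} [Category D] {X : D} {e f : X ≅ X}
    (h : e.hom ≫ f.hom = f.hom ≫ e.hom) : e.hom ≫ f.inv = f.inv ≫ e.hom := by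
  rw [Iso.comp_inv_eq, Category.assoc, h, Iso.inv_hom_id_assoc]

section nerveVertex

variable {C : Type u} [SmallCategory C] {n : ℕ}

lemma nerveVertex_δ (σ : nerve C _⦋n + 1⦌) (i : Fin (n + 2)) (k : Fin (n + 1)) :
    nerveVertex ((nerve C).δ i σ) k = nerveVertex σ (i.succAbove k) := rfl

lemma nerveVertex_σ (σ : nerve C _⦋n⦌) (i : Fin (n + 1)) (k : Fin (n + 2)) :
    nerveVertex ((nerve C).σ i σ) k = nerveVertex σ (i.predAbove k) := rfl

lemma nerveVertex_comparable (σ : nerve C _⦋n⦌) (a b : Fin (n + 1)) :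
    Nonempty (nerveVertex σ a ⟶ nerveVertex σ b) ∨ Nonempty (nerveVertex σ b ⟶ nerveVertex σ a) :=
  (le_total a b).imp (fun h => ⟨σ.map (homOfLE h)⟩) (fun h => ⟨σ.map (homOfLE h)⟩)

end nerveVertex

section twisted

variable {C : Type u} [SmallCategory C] (Y : SSet.{u}) (δ : C → (Y ≅ Y))

/-- `hi` and `hj` say that both sides twist by the same two vertices of the simplex. -/
lemma twistedFace_comp_twistedDegeneracy
    (hcomm : ∀ v w : C, (Nonempty (v ⟶ w) ∨ Nonempty (w ⟶ v)) →
      (δ v).hom ≫ (δ w).hom = (δ w).hom ≫ (δ v).hom)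
    {n : ℕ} {i : Fin (n + 3)} {j : Fin (n + 2)} {i' : Fin (n + 2)} {j' : Fin (n + 1)}
    (h : ∀ (X : SSet.{u}) (x : X _⦋n + 1⦌), X.δ i (X.σ j x) = X.σ j' (X.δ i' x))
    (hi : j.predAbove i = i') (hj : i'.succAbove j' = j) :
    twistedFace Y δ i ∘ twistedDegeneracy Y δ j =
      twistedDegeneracy Y δ j' ∘ twistedFace Y δ i' := by
  funext ⟨y, σ⟩
  refine Prod.ext ?_ (h _ σ)
  have hcomm' := Iso.hom_comp_inv_comm (hcomm _ _ (nerveVertex_comparable σ i' j))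
  simp only [Function.comp_apply, twistedFace, twistedDegeneracy, nerveVertex_σ, nerveVertex_δ,
    hi, hj, ← SSet.δ_naturality_apply, ← SSet.σ_naturality_apply, h]
  exact (ConcreteCategory.congr_hom (NatTrans.congr_app hcomm' _) _).symm

lemma twistedFace_comp_twistedDegeneracy_eq_id {n : ℕ} {i : Fin (n + 2)} {j : Fin (n + 1)}
    (h : ∀ (X : SSet.{u}) (x : X _⦋n⦌), X.δ i (X.σ j x) = x) (hi : j.predAbove i = j) :
    twistedFace Y δ i ∘ twistedDegeneracy Y δ j = id := by
  funext ⟨y, σ⟩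
  refine Prod.ext ?_ (h _ σ)
  simp only [Function.comp_apply, twistedFace, twistedDegeneracy, nerveVertex_σ, hi,
    ← SSet.δ_naturality_apply, h, Iso.inv_hom_id_app_apply, id]

end twisted

/-- for a nonsingular twisted structure `δ` on a small category `C` with
coefficients in a simplicial set `Y`, the mixed simplicial identities hold for the twisted
faces and degeneracies on `{Y_n × N(C)_n}`:
* `d_i^δ ∘ s_j^δ = s_{j−1}^δ ∘ d_i^δ` for `0 ≤ i < j ≤ n`,
* `d_j^δ ∘ s_j^δ = id` and `d_{j+1}^δ ∘ s_j^δ = id`,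
* `d_i^δ ∘ s_j^δ = s_j^δ ∘ d_{i−1}^δ` for `j + 1 < i ≤ n + 1`. -/
theorem twisted_mixed_simplicial_identities {C : Type u} [SmallCategory C] (Y : SSet.{u})
    (δ : C → (Y ≅ Y))
    (hcomm : ∀ v w : C, (Nonempty (v ⟶ w) ∨ Nonempty (w ⟶ v)) →
      (δ v).hom ≫ (δ w).hom = (δ w).hom ≫ (δ v).hom) :
    (∀ (n : ℕ) (i : Fin (n + 2)) (j : Fin (n + 1)), i ≤ j.castSucc →
      (twistedFace Y δ i.castSucc) ∘ (twistedDegeneracy Y δ j.succ) =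
        (twistedDegeneracy Y δ j) ∘ (twistedFace Y δ i)) ∧
    (∀ (n : ℕ) (j : Fin (n + 1)),
      (twistedFace Y δ j.castSucc) ∘ (twistedDegeneracy Y δ j) = id) ∧
    (∀ (n : ℕ) (j : Fin (n + 1)),
      (twistedFace Y δ j.succ) ∘ (twistedDegeneracy Y δ j) = id) ∧
    (∀ (n : ℕ) (i : Fin (n + 2)) (j : Fin (n + 1)), j.castSucc < i →
      (twistedFace Y δ i.succ) ∘ (twistedDegeneracy Y δ j.castSucc) =
        (twistedDegeneracy Y δ j) ∘ (twistedFace Y δ i)) := by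
  refine ⟨fun n i j h => ?_, fun n j => ?_, fun n j => ?_, fun n i j h => ?_⟩
  · exact twistedFace_comp_twistedDegeneracy Y δ hcomm (fun X => X.δ_comp_σ_of_le_apply h)
      (Fin.predAbove_castSucc_of_le _ _ (h.trans j.castSucc_le_succ))
      (Fin.succAbove_of_le_castSucc _ _ h)
  · exact twistedFace_comp_twistedDegeneracy_eq_id Y δ (fun X => X.δ_comp_σ_self_apply j)
      j.predAbove_castSucc_self
  · exact twistedFace_comp_twistedDegeneracy_eq_id Y δ (fun X => X.δ_comp_σ_succ_apply j)
      j.predAbove_succ_self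
  · exact twistedFace_comp_twistedDegeneracy Y δ hcomm (fun X => X.δ_comp_σ_of_gt_apply h)
      (Fin.predAbove_succ_of_le _ _ h.le) (Fin.succAbove_of_castSucc_lt _ _ h)
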